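/- arXiv:1710.04447 — 2 statements merged into one kernel-verified Lean document; each statement's English description precedes it below -/
import Mathlib

section
/- Let |c₀⟩, |c₁⟩ be unit vectors in ℂ² with 0 < |⟨c₀|c₁⟩| < 1. If a unitary U on ℂ²⊗ℂ² maps each product state |c_k⟩⊗|c_l⟩ (k,l ∈ {0,1}) to some e^{iφ_{kl}}|c_m⟩⊗|c_n⟩ with m,n ∈ {0,1}, then U maps every product state (with respect to the tensor factorization) to a product state; in particular U cannot map any product state to an entangled state. -/
open Matrix

/-- The inner product ⟨x|y⟩ on ℂ². -/
noncomputable def inp (x y : Fin 2 → ℂ) : ℂ := star x ⬝ᵥ y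

/-- The tensor product a ⊗ b of two vectors of ℂ², as a vector of ℂ²⊗ℂ². -/
def tv (a b : Fin 2 → ℂ) : Fin 2 × Fin 2 → ℂ := fun p => a p.1 * b p.2

/-!
Unitarity preserves the inner products ⟨c_k ⊗ c_l | c_k' ⊗ c_l'⟩, whose moduli are r ^ d with
r = |⟨c₀|c₁⟩| ∈ (0, 1) and d the number of differing labels. So the label map (k, l) ↦ (m, n) is an
isometry of the Hamming square {0,1}², i.e. a product map f × g, possibly followed by the swap of
the factors. Comparing ⟨U(c_k ⊗ c₀) | U(c_k ⊗ c₁)⟩ for k = 0, 1 gives the phase relation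
z₀₀ z₁₁ = z₀₁ z₁₀, so the phases factor as z_kl = u_k v_l. As c₀, c₁ span ℂ², writing
a = Σ α_k c_k and b = Σ β_l c_l yields U(a ⊗ b) = (Σ α_k u_k c_{f k}) ⊗ (Σ β_l v_l c_{g l}),
or the same with the factors swapped.
-/

lemma inp_comm (x y : Fin 2 → ℂ) : inp y x = starRingEnd ℂ (inp x y) := by
  simp [inp, dotProduct, Fin.sum_univ_two, mul_comm]

lemma dotProduct_tv (x y x' y' : Fin 2 → ℂ) :
    star (tv x y) ⬝ᵥ tv x' y' = inp x x' * inp y y' := by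
  simp only [tv, inp, dotProduct, Fintype.sum_prod_type, Fin.sum_univ_two, Pi.star_apply,
    star_mul']
  ring

lemma tv_sum_smul_sum_smul {ι κ : Type*} [Fintype ι] [Fintype κ] (α : ι → ℂ) (β : κ → ℂ)
    (x : ι → Fin 2 → ℂ) (y : κ → Fin 2 → ℂ) :
    tv (∑ k, α k • x k) (∑ l, β l • y l) = ∑ k, ∑ l, (α k * β l) • tv (x k) (y l) := by
  ext p
  simp only [tv, Finset.sum_apply, Pi.smul_apply, smul_eq_mul, Finset.sum_mul_sum]
  exact Finset.sum_congr rfl fun _ _ => Finset.sum_congr rfl fun _ _ => by ring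

lemma linearIndependent_of_norm_inp_lt_one {x y : Fin 2 → ℂ} (hx : inp x x = 1)
    (hy : inp y y = 1) (hxy : ‖inp x y‖ < 1) : LinearIndependent ℂ ![x, y] := by
  rw [LinearIndependent.pair_iff]
  intro s t hst
  have hinp (z : Fin 2 → ℂ) : s * inp z x + t * inp z y = 0 := by
    simpa [inp, dotProduct_add, dotProduct_smul] using congrArg (star z ⬝ᵥ ·) hst
  have h0 := hinp x
  have h1 := hinp y
  rw [hx] at h0
  rw [hy, inp_comm] at h1
  have ht : t * (1 - ‖inp x y‖ ^ 2) = 0 := by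
    rw [← Complex.mul_conj']
    linear_combination h1 - starRingEnd ℂ (inp x y) * h0
  have hne : (1 - ‖inp x y‖ ^ 2 : ℂ) ≠ 0 := by
    norm_cast
    nlinarith [norm_nonneg (inp x y)]
  obtain rfl : t = 0 := (mul_eq_zero.mp ht).resolve_right hne
  simpa using h0

def pairDist (p q : Fin 2 × Fin 2) : ℕ :=
  (if p.1 = q.1 then 0 else 1) + (if p.2 = q.2 then 0 else 1)

lemma exists_eq_prodMap_or_swap_of_pairDist {σ : Fin 2 × Fin 2 → Fin 2 × Fin 2}
    (hσ : ∀ p q, pairDist (σ p) (σ q) = pairDist p q) :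
    ∃ f g : Fin 2 → Fin 2, σ = Prod.map f g ∨ σ = Prod.swap ∘ Prod.map f g := by
  have corners : ∀ a b c d : Fin 2 × Fin 2, pairDist a b = 1 → pairDist a d = 2 →
      pairDist b c = 2 →
      (b.1 = a.1 ∧ c.2 = a.2 ∧ d = (c.1, b.2)) ∨ (b.2 = a.2 ∧ c.1 = a.1 ∧ d = (b.1, c.2)) := by
    unfold pairDist; decide
  rcases corners (σ (0, 0)) (σ (0, 1)) (σ (1, 0)) (σ (1, 1)) (hσ _ _) (hσ _ _) (hσ _ _) with
    ⟨h01, h10, h11⟩ | ⟨h01, h10, h11⟩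
  · refine ⟨fun k => (σ (k, 0)).1, fun l => (σ (0, l)).2, Or.inl ?_⟩
    funext ⟨k, l⟩
    fin_cases k <;> fin_cases l <;> simp [Prod.ext_iff, h01, h10, h11]
  · refine ⟨fun k => (σ (k, 0)).2, fun l => (σ (0, l)).1, Or.inr ?_⟩
    funext ⟨k, l⟩
    fin_cases k <;> fin_cases l <;> simp [Prod.ext_iff, h01, h10, h11]

lemma exists_sum_smul_eq_of_norm_inp_lt_one {c : Fin 2 → Fin 2 → ℂ}
    (hunit : ∀ k, inp (c k) (c k) = 1) (hlt : ‖inp (c 0) (c 1)‖ < 1) (x : Fin 2 → ℂ) :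
    ∃ α : Fin 2 → ℂ, ∑ k, α k • c k = x := by
  classical
  have hc : LinearIndependent ℂ c := by
    convert linearIndependent_of_norm_inp_lt_one (hunit 0) (hunit 1) hlt
    ext k : 1
    fin_cases k <;> rfl
  let b := basisOfPiSpaceOfLinearIndependent hc
  exact ⟨b.repr x, by simpa [b] using b.sum_repr x⟩

lemma star_mulVec_dotProduct_mulVec {n α : Type*} [Fintype n] [DecidableEq n] [CommRing α]
    [StarRing α] {U : Matrix n n α} (hU : U ∈ unitaryGroup n α) (x y : n → α) :
    star (U *ᵥ x) ⬝ᵥ (U *ᵥ y) = star x ⬝ᵥ y := by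
  rw [star_mulVec, dotProduct_mulVec, vecMul_vecMul, ← star_eq_conjTranspose,
    (mem_unitaryGroup_iff'.mp hU), vecMul_one]

lemma dotProduct_eq_of_mulVec_eq_smul {n α : Type*} [Fintype n] [DecidableEq n] [CommRing α]
    [StarRing α] {U : Matrix n n α} (hU : U ∈ unitaryGroup n α) {x x' y y' : n → α} {z z' : α}
    (hx : U *ᵥ x = z • y) (hx' : U *ᵥ x' = z' • y') :
    star x ⬝ᵥ x' = star z * z' * (star y ⬝ᵥ y') := by
  rw [← star_mulVec_dotProduct_mulVec hU, hx, hx', star_smul, smul_dotProduct, dotProduct_smul,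
    smul_smul, smul_eq_mul]

lemma exists_eq_mul_of_mul_eq_mul {K : Type*} [Field K] {z : Fin 2 → Fin 2 → K}
    (h0 : z 0 0 ≠ 0) (h : z 0 0 * z 1 1 = z 0 1 * z 1 0) :
    ∃ u v : Fin 2 → K, ∀ k l, z k l = u k * v l := by
  refine ⟨fun k => z k 0, fun l => z 0 l / z 0 0, ?_⟩
  simp only [Fin.forall_fin_two]
  refine ⟨⟨?_, ?_⟩, ?_, ?_⟩ <;> field_simp
  linear_combination h

lemma mul_eq_mul_of_star_mul_eq {a a' b b' : ℂ} (ha : ‖a‖ = 1) (hb : ‖b‖ = 1)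
    (h : star a * a' = star b * b') : a * b' = a' * b := by
  have hstar {w : ℂ} (hw : ‖w‖ = 1) : star w * w = 1 := by
    rw [Complex.star_def, Complex.conj_mul', hw, Complex.ofReal_one, one_pow]
  linear_combination (-(a * b)) * h + a' * b * hstar ha - a * b' * hstar hb

section FreeStates

variable {c : Fin 2 → Fin 2 → ℂ}

lemma norm_inp_eq_pow (hunit : ∀ k, inp (c k) (c k) = 1) (k l : Fin 2) :
    ‖inp (c k) (c l)‖ = ‖inp (c 0) (c 1)‖ ^ (if k = l then 0 else 1) := by
  fin_cases k <;> fin_cases l <;> simp [hunit, inp_comm (c 0) (c 1)]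

lemma norm_dotProduct_tv_eq_pow (hunit : ∀ k, inp (c k) (c k) = 1) (p q : Fin 2 × Fin 2) :
    ‖star (tv (c p.1) (c p.2)) ⬝ᵥ tv (c q.1) (c q.2)‖ = ‖inp (c 0) (c 1)‖ ^ pairDist p q := by
  rw [dotProduct_tv, norm_mul, norm_inp_eq_pow hunit p.1, norm_inp_eq_pow hunit p.2, pairDist,
    pow_add]

theorem exists_prodMap_or_swap_of_mulVec_tv_eq_smul (hunit : ∀ k, inp (c k) (c k) = 1)
    (hlow : 0 < ‖inp (c 0) (c 1)‖)
    (hup : ‖inp (c 0) (c 1)‖ < 1) {U : Matrix (Fin 2 × Fin 2) (Fin 2 × Fin 2) ℂ}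
    (hU : U ∈ unitaryGroup (Fin 2 × Fin 2) ℂ) {z : Fin 2 → Fin 2 → ℂ} (hz : ∀ k l, ‖z k l‖ = 1)
    {σ : Fin 2 × Fin 2 → Fin 2 × Fin 2}
    (hσ : ∀ k l, U *ᵥ tv (c k) (c l) = z k l • tv (c (σ (k, l)).1) (c (σ (k, l)).2)) :
    ∃ (f g : Fin 2 → Fin 2) (u v : Fin 2 → ℂ),
      (∀ k l, U *ᵥ tv (c k) (c l) = (u k * v l) • tv (c (f k)) (c (g l))) ∨
      (∀ k l, U *ᵥ tv (c k) (c l) = (u k * v l) • tv (c (g l)) (c (f k))) := by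
  have hdot (p q : Fin 2 × Fin 2) := dotProduct_eq_of_mulVec_eq_smul hU (hσ p.1 p.2) (hσ q.1 q.2)
  have hdist (p q : Fin 2 × Fin 2) : pairDist (σ p) (σ q) = pairDist p q := by
    have h := congrArg norm (hdot p q)
    rw [norm_mul, norm_mul, norm_star, hz, hz, one_mul, one_mul, norm_dotProduct_tv_eq_pow hunit,
      norm_dotProduct_tv_eq_pow hunit] at h
    exact (pow_right_injective₀ hlow hup.ne).eq_iff.mp h.symm
  obtain ⟨f, g, hfg⟩ := exists_eq_prodMap_or_swap_of_pairDist hdist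
  have hrow : star (tv (c (σ (0, 0)).1) (c (σ (0, 0)).2)) ⬝ᵥ tv (c (σ (0, 1)).1) (c (σ (0, 1)).2)
      = star (tv (c (σ (1, 0)).1) (c (σ (1, 0)).2)) ⬝ᵥ tv (c (σ (1, 1)).1) (c (σ (1, 1)).2) := by
    rcases hfg with rfl | rfl <;> simp [dotProduct_tv, hunit]
  have hphase : z 0 0 * z 1 1 = z 0 1 * z 1 0 := by
    have hsrc : star (tv (c 0) (c 0)) ⬝ᵥ tv (c 0) (c 1)
        = star (tv (c 1) (c 0)) ⬝ᵥ tv (c 1) (c 1) := by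
      simp [dotProduct_tv, hunit]
    have hne : star (tv (c 0) (c 0)) ⬝ᵥ tv (c 0) (c 1) ≠ 0 := by
      simpa [dotProduct_tv, hunit] using hlow
    rw [hdot (0, 0) (0, 1)] at hsrc hne
    rw [hdot (1, 0) (1, 1), ← hrow] at hsrc
    exact mul_eq_mul_of_star_mul_eq (hz 0 0) (hz 1 0)
      (mul_right_cancel₀ (right_ne_zero_of_mul hne) hsrc)
  obtain ⟨u, v, huv⟩ := exists_eq_mul_of_mul_eq_mul (norm_ne_zero_iff.mp (by simp [hz])) hphase
  refine ⟨f, g, u, v, ?_⟩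
  rcases hfg with rfl | rfl
  · exact Or.inl fun k l => by rw [hσ, huv]; rfl
  · exact Or.inr fun k l => by rw [hσ, huv]; rfl

end FreeStates

/-- A superposition-free unitary (w.r.t. non-orthogonal, non-parallel free states
c 0, c 1 of each qubit) maps every product state to a product state; in particular
it cannot create entanglement from any product state. -/
theorem stmt_2 (c : Fin 2 → Fin 2 → ℂ)
    (hunit : ∀ k, inp (c k) (c k) = 1)
    (hlow : 0 < ‖inp (c 0) (c 1)‖)
    (hup : ‖inp (c 0) (c 1)‖ < 1)
    (U : Matrix (Fin 2 × Fin 2) (Fin 2 × Fin 2) ℂ)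
    (hU : U ∈ Matrix.unitaryGroup (Fin 2 × Fin 2) ℂ)
    (hfree : ∀ k l : Fin 2, ∃ (φ : ℝ) (m n : Fin 2),
      U.mulVec (tv (c k) (c l)) = Complex.exp (Complex.I * φ) • tv (c m) (c n)) :
    ∀ a b : Fin 2 → ℂ, ∃ a' b' : Fin 2 → ℂ, U.mulVec (tv a b) = tv a' b' := by
  intro a b
  choose φ m n hφ using hfree
  obtain ⟨f, g, u, v, hfg | hgf⟩ :=
    exists_prodMap_or_swap_of_mulVec_tv_eq_smul hunit hlow hup hU
      (z := fun k l => Complex.exp (Complex.I * φ k l))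
      (fun k l => by rw [mul_comm]; exact Complex.norm_exp_ofReal_mul_I _)
      (σ := fun p => (m p.1 p.2, n p.1 p.2)) hφ
  all_goals
    obtain ⟨α, rfl⟩ := exists_sum_smul_eq_of_norm_inp_lt_one hunit hup a
    obtain ⟨β, rfl⟩ := exists_sum_smul_eq_of_norm_inp_lt_one hunit hup b
    simp only [tv_sum_smul_sum_smul, mulVec_sum, mulVec_smul]
  · refine ⟨∑ k, (α k * u k) • c (f k), ∑ l, (β l * v l) • c (g l), ?_⟩
    simp only [hfg, tv_sum_smul_sum_smul, smul_smul, mul_mul_mul_comm]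
  · refine ⟨∑ l, (β l * v l) • c (g l), ∑ k, (α k * u k) • c (f k), ?_⟩
    rw [tv_sum_smul_sum_smul, Finset.sum_comm]
    simp only [hgf, smul_smul, mul_mul_mul_comm, mul_comm]
end

section
/- For any two qubit density matrices ρ, σ (2×2 positive semidefinite, trace 1), the trace norm of their difference equals twice the Hilbert–Schmidt-expressible quantity: ‖ρ−σ‖₁ = 2√(|ρ₀₀−σ₀₀|² + |ρ₀₁−σ₀₁|²). In particular, for single-qubit states the trace-norm coherence min_{σ diagonal}‖ρ−σ‖₁ coincides with the ℓ₁-norm of coherence 2|ρ₀₁|. -/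
/-! For a traceless Hermitian qubit matrix `M`, Cayley–Hamilton gives `M² = -det M • 1` with
`-det M = |M₀₀|² + |M₀₁|²`, so `√(MᴴM)` is a scalar matrix and `‖M‖₁ = 2√(|M₀₀|² + |M₀₁|²)`.
The difference of two density matrices is such an `M`. Against diagonal states `τ` the off-diagonal
term is fixed, and the diagonal term vanishes exactly for `τ = diag ρ`. -/

open Matrix
open scoped ComplexOrder

/-- The trace norm ‖M‖₁ = Tr√(M†M). -/
noncomputable def traceNorm {n : Type*} [Fintype n] [DecidableEq n]
    (M : Matrix n n ℂ) : ℝ :=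
  (((Matrix.posSemidef_conjTranspose_mul_self M).1.eigenvectorUnitary : Matrix n n ℂ) *
    diagonal (((↑) : ℝ → ℂ) ∘ Real.sqrt ∘ (Matrix.posSemidef_conjTranspose_mul_self M).1.eigenvalues) *
    (star (Matrix.posSemidef_conjTranspose_mul_self M).1.eigenvectorUnitary : Matrix n n ℂ)).trace.re

/-- A density matrix: positive semidefinite with unit trace. -/
def IsDensity {n : Type*} [Fintype n] (ρ : Matrix n n ℂ) : Prop :=
  ρ.PosSemidef ∧ ρ.trace = 1

lemma traceNorm_eq_sum_sqrt_eigenvalues {n : Type*} [Fintype n] [DecidableEq n]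
    (M : Matrix n n ℂ) :
    traceNorm M = ∑ i, √((posSemidef_conjTranspose_mul_self M).1.eigenvalues i) := by
  rw [traceNorm, trace_mul_cycle, Unitary.coe_star_mul_self, one_mul, trace_diagonal]
  simp

lemma Matrix.IsHermitian.eigenvalues_eq_of_eq_smul_one {n : Type*} [Fintype n] [DecidableEq n]
    {A : Matrix n n ℂ} (hA : A.IsHermitian) {r : ℝ} (h : A = (r : ℂ) • 1) (i : n) :
    hA.eigenvalues i = r := by
  subst h
  have hdiag := congrFun (congrFun hA.conjStarAlgAut_star_eigenvectorUnitary i) i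
  rw [map_smul, map_one] at hdiag
  simpa using hdiag.symm

lemma traceNorm_of_conjTranspose_mul_self_eq_smul_one {n : Type*} [Fintype n] [DecidableEq n]
    (M : Matrix n n ℂ) {r : ℝ} (h : Mᴴ * M = (r : ℂ) • 1) :
    traceNorm M = Fintype.card n * √r := by
  simp [traceNorm_eq_sum_sqrt_eigenvalues,
    (posSemidef_conjTranspose_mul_self M).1.eigenvalues_eq_of_eq_smul_one h]

lemma conjTranspose_mul_self_eq_smul_one_of_trace_eq_zero {M : Matrix (Fin 2) (Fin 2) ℂ}
    (hM : M.IsHermitian) (htr : M.trace = 0) :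
    Mᴴ * M = ((‖M 0 0‖ ^ 2 + ‖M 0 1‖ ^ 2 : ℝ) : ℂ) • 1 := by
  have h00 : star (M 0 0) = M 0 0 := by simpa using congrFun (congrFun hM 0) 0
  have h10 : M 1 0 = star (M 0 1) := by simpa using (congrFun (congrFun hM 1) 0).symm
  have h11 : M 1 1 = -M 0 0 := by
    rw [trace_fin_two] at htr
    linear_combination htr
  have hnorm : ∀ z : ℂ, ((‖z‖ ^ 2 : ℝ) : ℂ) = star z * z := fun z => by
    rw [mul_comm, Complex.star_def, Complex.mul_conj, Complex.normSq_eq_norm_sq]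
  rw [hM, Complex.ofReal_add, hnorm, hnorm, h00]
  ext i j
  fin_cases i <;> fin_cases j <;> simp [mul_apply, h10, h11] <;> ring

lemma traceNorm_of_isHermitian_of_trace_eq_zero {M : Matrix (Fin 2) (Fin 2) ℂ}
    (hM : M.IsHermitian) (htr : M.trace = 0) :
    traceNorm M = 2 * √(‖M 0 0‖ ^ 2 + ‖M 0 1‖ ^ 2) := by
  simp [traceNorm_of_conjTranspose_mul_self_eq_smul_one M
    (conjTranspose_mul_self_eq_smul_one_of_trace_eq_zero hM htr)]

lemma traceNorm_sub_of_isDensity {ρ σ : Matrix (Fin 2) (Fin 2) ℂ}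
    (hρ : IsDensity ρ) (hσ : IsDensity σ) :
    traceNorm (ρ - σ) = 2 * √(‖ρ 0 0 - σ 0 0‖ ^ 2 + ‖ρ 0 1 - σ 0 1‖ ^ 2) :=
  traceNorm_of_isHermitian_of_trace_eq_zero (hρ.1.1.sub hσ.1.1)
    (by rw [trace_sub, hρ.2, hσ.2, sub_self])

lemma IsDensity.diagonal_diag {n : Type*} [Fintype n] [DecidableEq n] {ρ : Matrix n n ℂ}
    (hρ : IsDensity ρ) : IsDensity (diagonal ρ.diag) :=
  ⟨posSemidef_diagonal_iff.mpr fun _ => hρ.1.diag_nonneg, by rw [trace_diagonal]; exact hρ.2⟩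

/-- For qubit density matrices ρ, σ, ‖ρ−σ‖₁ = 2√(|ρ₀₀−σ₀₀|²+|ρ₀₁−σ₀₁|²); in
particular the trace-norm coherence (minimal trace distance to diagonal states)
coincides with the ℓ₁-norm of coherence 2|ρ₀₁|. -/
theorem stmt_16 (ρ σ : Matrix (Fin 2) (Fin 2) ℂ)
    (hρ : IsDensity ρ) (hσ : IsDensity σ) :
    traceNorm (ρ - σ) =
      2 * Real.sqrt (‖ρ 0 0 - σ 0 0‖ ^ 2 +
        ‖ρ 0 1 - σ 0 1‖ ^ 2) ∧
    IsLeast {x : ℝ | ∃ τ : Matrix (Fin 2) (Fin 2) ℂ,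
        IsDensity τ ∧ τ.IsDiag ∧ x = traceNorm (ρ - τ)}
      (2 * ‖ρ 0 1‖) := by
  refine ⟨traceNorm_sub_of_isDensity hρ hσ,
    ⟨diagonal ρ.diag, hρ.diagonal_diag, isDiag_diagonal _, ?_⟩, ?_⟩
  · simp [traceNorm_sub_of_isDensity hρ hρ.diagonal_diag]
  · rintro _ ⟨τ, hτ, hτdiag, rfl⟩
    rw [traceNorm_sub_of_isDensity hρ hτ, hτdiag (by decide : (0 : Fin 2) ≠ 1), sub_zero]
    gcongr
    exact Real.le_sqrt_of_sq_le (le_add_of_nonneg_left (sq_nonneg _))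
end
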